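/- Let L ⊆ A* be an automatic structure for π : A* → G admitting a departure function. For every p > 0 there exists q > 0 such that: whenever u₁,u₂,u₃ ∈ L are such that the concatenation u₁u₂ and u₃ are p-meeting-fellow-travellers, then for all u'₁,u'₂,u'₃ ∈ L with u'ᵢπ = uᵢπ for i = 1,2,3, the inequality d_A((u'₁u'₂)^[n]π, u'₃^[n]π) ≤ q holds for all n ∈ ℕ. -/

import Mathlib

/-!
Two words of `L` with the same value `N`-fellow travel, `N` being the constant of the automatic
structure. Their lengths therefore differ by less than `K = ⌈D(N)⌉`: were one longer by `K` or
more, the departure function would put its prefix of the length of the other more than `N` away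
from its endpoint, whereas fellow travelling puts that prefix within `N` of the common value.
Hence replacing `u₁, u₂` by `u₁', u₂'` moves the junction of the concatenation by at most `K`,
and the prefixes of `u₁'u₂'` stay within `N + 2K` of those of `u₁u₂`. The triangle inequality
through `u₁u₂` and `u₃` then gives `q = p + 2N + 2K`.
-/

open scoped NNReal

namespace Auto

/-- The generating set `Aπ ∪ (Aπ)⁻¹` of `G` determined by `π : A* → G`. -/
def gens {A G : Type*} [Group G] (π : FreeMonoid A →* G) : Set G :=
  (Set.range fun a : A => π (FreeMonoid.of a)) ∪
    Set.range fun a : A => (π (FreeMonoid.of a))⁻¹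

/-- The word metric `d_A` on `G`: the least `n` such that `g⁻¹h` is a product of `n`
elements of `Aπ ∪ (Aπ)⁻¹`. -/
noncomputable def wdist {A G : Type*} [Group G] (π : FreeMonoid A →* G) (g h : G) : ℕ :=
  sInf {n : ℕ | ∃ l : List G, l.length = n ∧ (∀ x ∈ l, x ∈ gens π) ∧ l.prod = g⁻¹ * h}

/-- Evaluation of a word of `A*` in `G`. -/
def evalW {A G : Type*} [Group G] (π : FreeMonoid A →* G) (w : List A) : G :=
  π (FreeMonoid.ofList w)

/-- `u` and `v` `p`-fellow travel: `d_A(u^[n]π, v^[n]π) ≤ p` for all `n`. -/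
def FellowTravel {A G : Type*} [Group G] (π : FreeMonoid A →* G) (p : ℝ≥0)
    (u v : List A) : Prop :=
  ∀ n : ℕ, (wdist π (evalW π (u.take n)) (evalW π (v.take n)) : ℝ≥0) ≤ p

/-- `u` and `v` are `p`-meeting-fellow-travellers. -/
def MFT {A G : Type*} [Group G] (π : FreeMonoid A →* G) (p : ℝ≥0) (u v : List A) : Prop :=
  FellowTravel π p u v ∧ evalW π u = evalW π v

/-- A language is regular if it is accepted by a finite-state automaton. -/
def IsRegular {A : Type*} (L : Language A) : Prop :=
  ∃ (σ : Type) (_ : Fintype σ) (M : DFA A σ), M.accepts = L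

/-- `L` is an automatic structure for `π`. -/
structure IsAutomaticStructure {A G : Type*} [Group G] (π : FreeMonoid A →* G)
    (L : Language A) : Prop where
  regular : IsRegular L
  onto : ∀ g : G, ∃ w ∈ L, evalW π w = g
  ft : ∃ N : ℕ, ∀ u ∈ L, ∀ v ∈ L,
    wdist π (evalW π u) (evalW π v) ≤ 1 → FellowTravel π N u v

/-- Evaluation of an element of `A ∪ {ε}`. -/
def evalOpt {A G : Type*} [Group G] (π : FreeMonoid A →* G) : Option A → G
  | none => 1
  | some a => π (FreeMonoid.of a)

/-- `L` is a biautomatic structure for `π`. -/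
structure IsBiautomaticStructure {A G : Type*} [Group G] (π : FreeMonoid A →* G)
    (L : Language A) extends IsAutomaticStructure π L : Prop where
  bi : ∃ N : ℕ, ∀ u ∈ L, ∀ v ∈ L, ∀ a : Option A,
    evalW π v = evalOpt π a * evalW π u →
    ∀ n : ℕ, wdist π (evalOpt π a * evalW π (u.take n)) (evalW π (v.take n)) ≤ N

/-- A language is factorial if it is closed under taking factors. -/
def IsFactorial {A : Type*} (L : Language A) : Prop :=
  ∀ u ∈ L, ∀ v : List A, v <:+: u → v ∈ L

/-- `D : ℝ≥0 → ℝ≥0` is a departure function for `(G, L)`. -/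
def IsDepartureFunction {A G : Type*} [Group G] (π : FreeMonoid A →* G) (L : Language A)
    (D : ℝ≥0 → ℝ≥0) : Prop :=
  ∀ w ∈ L, ∀ r : ℝ≥0, ∀ s t : ℕ, D r ≤ (t : ℝ≥0) → s + t ≤ w.length →
    r < (wdist π (evalW π (w.take s)) (evalW π (w.take (s + t))) : ℝ≥0)

/-- Every point of `S` is within distance `N` of `T`. -/
def NbhdIn {A G : Type*} [Group G] (π : FreeMonoid A →* G) (N : ℕ) (S T : Set G) : Prop :=
  ∀ s ∈ S, ∃ t ∈ T, wdist π s t ≤ N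

/-- The Hausdorff distance between `S` and `T` is at most `N`. -/
def HausdorffLE {A G : Type*} [Group G] (π : FreeMonoid A →* G) (N : ℕ)
    (S T : Set G) : Prop :=
  NbhdIn π N S T ∧ NbhdIn π N T S

/-- `H` is an `L`-quasiconvex subgroup of `G`. -/
def IsQuasiconvex {A G : Type*} [Group G] (π : FreeMonoid A →* G) (L : Language A)
    (H : Subgroup G) : Prop :=
  ∃ k : ℕ, ∀ h ∈ H, ∀ h' ∈ H, ∀ w ∈ L, h * evalW π w = h' →
    ∀ n : ℕ, ∃ z ∈ H, wdist π (h * evalW π (w.take n)) z ≤ k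

/-- The bounded reduction property for `(φ, L, L')`. -/
def BRP {A B G G' : Type*} [Group G] [Group G'] (π : FreeMonoid A →* G)
    (π' : FreeMonoid B →* G') (φ : G →* G') (L : Language A) (L' : Language B) : Prop :=
  ∃ N : ℕ, ∀ x : G, ∀ α ∈ L, ∀ β ∈ L', evalW π' β = φ (evalW π α) →
    HausdorffLE π' N (Set.range fun n : ℕ => φ (x * evalW π (α.take n)))
      (Set.range fun n : ℕ => φ x * evalW π' (β.take n))

/-- The synchronous bounded reduction property for `(φ, L, L')`. -/
def SyncBRP {A B G G' : Type*} [Group G] [Group G'] (π : FreeMonoid A →* G)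
    (π' : FreeMonoid B →* G') (φ : G →* G') (L : Language A) (L' : Language B) : Prop :=
  ∃ N : ℕ, ∀ x : G, ∀ α ∈ L, ∀ β ∈ L', evalW π' β = φ (evalW π α) →
    ∀ n : ℕ, wdist π' (φ (x * evalW π (α.take n))) (φ x * evalW π' (β.take n)) ≤ N

/-- The fellow traveller bounded reduction property (FT-BRP) for `(φ, L, L')`. -/
def FTBRP {A B G G' : Type*} [Group G] [Group G'] (π : FreeMonoid A →* G)
    (π' : FreeMonoid B →* G') (φ : G →* G') (L : Language A) (L' : Language B) : Prop :=
  ∀ p : ℝ≥0, ∃ q : ℝ≥0,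
    ∀ u₁ ∈ L, ∀ u₂ ∈ L, ∀ u₃ ∈ L, ∀ u₁' ∈ L', ∀ u₂' ∈ L', ∀ u₃' ∈ L',
      evalW π' u₁' = φ (evalW π u₁) → evalW π' u₂' = φ (evalW π u₂) →
        evalW π' u₃' = φ (evalW π u₃) →
          MFT π p (u₁ ++ u₂) u₃ → MFT π' q (u₁' ++ u₂') u₃'

/-- The natural homomorphism `(A ⊔ B)* → G` agreeing with `π₁` on `A` and `π₂` on `B`. -/
def sumHom {A B G : Type*} [Group G] (π₁ : FreeMonoid A →* G) (π₂ : FreeMonoid B →* G) :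
    FreeMonoid (A ⊕ B) →* G :=
  FreeMonoid.lift (Sum.elim (fun a => π₁ (FreeMonoid.of a)) fun b => π₂ (FreeMonoid.of b))

/-- The union `L₁ ∪ L₂` viewed as a language over `A ⊔ B`. -/
def unionLang {A B : Type*} (L₁ : Language A) (L₂ : Language B) : Language (A ⊕ B) :=
  {w : List (A ⊕ B) | (∃ u ∈ L₁, w = u.map Sum.inl) ∨ ∃ v ∈ L₂, w = v.map Sum.inr}

/-- `L` is an asynchronous automatic structure for `π`. -/
def IsAsyncAutomaticStructure {A G : Type*} [Group G] (π : FreeMonoid A →* G)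
    (L : Language A) : Prop :=
  IsRegular L ∧ (∀ g : G, ∃ w ∈ L, evalW π w = g) ∧
    ∃ p : ℕ, ∀ u ∈ L, ∀ v ∈ L, wdist π (evalW π u) (evalW π v) ≤ 1 →
      ∃ φ ψ : ℕ → ℕ, Monotone φ ∧ Monotone ψ ∧
        Function.Surjective φ ∧ Function.Surjective ψ ∧
          ∀ t : ℕ, wdist π (evalW π (u.take (φ t))) (evalW π (v.take (ψ t))) ≤ p

/-- `L₁` and `L₂` are equivalent automatic structures. -/
def LangEquivalent {A B G : Type*} [Group G] (π₁ : FreeMonoid A →* G)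
    (π₂ : FreeMonoid B →* G) (L₁ : Language A) (L₂ : Language B) : Prop :=
  IsAsyncAutomaticStructure (sumHom π₁ π₂) (unionLang L₁ L₂)

/-- `L₁` and `L₂` are synchronously equivalent automatic structures. -/
def LangSyncEquivalent {A B G : Type*} [Group G] (π₁ : FreeMonoid A →* G)
    (π₂ : FreeMonoid B →* G) (L₁ : Language A) (L₂ : Language B) : Prop :=
  IsAutomaticStructure (sumHom π₁ π₂) (unionLang L₁ L₂)

/-- `L` has the Hausdorff closeness property. -/
def HausClose {A G : Type*} [Group G] (π : FreeMonoid A →* G) (L : Language A) : Prop :=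
  ∃ N : ℕ, ∀ u ∈ L, ∀ v ∈ L, wdist π (evalW π u) (evalW π v) ≤ 1 →
    HausdorffLE π N (Set.range fun n : ℕ => evalW π (u.take n))
      (Set.range fun n : ℕ => evalW π (v.take n))

/-- The padded alphabet `C = (A×B) ∪ (A×{$}) ∪ ({$}×B)` of convolution. -/
abbrev ConvAlphabet (A B : Type*) := (A × B) ⊕ (A ⊕ B)

/-- The convolution `u ⋄ v` of two words. -/
def conv {A B : Type*} : List A → List B → List (ConvAlphabet A B)
  | [], [] => []
  | [], b :: v => Sum.inr (Sum.inr b) :: conv [] v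
  | a :: u, [] => Sum.inr (Sum.inl a) :: conv u []
  | a :: u, b :: v => Sum.inl (a, b) :: conv u v
  termination_by u v => u.length + v.length

/-- The convolution `L₁ ⋄ L₂` of two languages. -/
def convLang {A B : Type*} (L₁ : Language A) (L₂ : Language B) :
    Language (ConvAlphabet A B) :=
  {w : List (ConvAlphabet A B) | ∃ u ∈ L₁, ∃ v ∈ L₂, w = conv u v}

/-- The natural homomorphism `C* → G × G'` for the convolution alphabet. -/
def convHom {A B G G' : Type*} [Group G] [Group G'] (π₁ : FreeMonoid A →* G)
    (π₂ : FreeMonoid B →* G') : FreeMonoid (ConvAlphabet A B) →* G × G' :=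
  FreeMonoid.lift fun c =>
    match c with
    | Sum.inl (a, b) => (π₁ (FreeMonoid.of a), π₂ (FreeMonoid.of b))
    | Sum.inr (Sum.inl a) => (π₁ (FreeMonoid.of a), 1)
    | Sum.inr (Sum.inr b) => (1, π₂ (FreeMonoid.of b))

/-- A group is automatic if it admits an automatic structure over some finite alphabet. -/
def IsAutomaticGroup (G : Type*) [Group G] : Prop :=
  ∃ (A : Type) (_ : Fintype A) (π : FreeMonoid A →* G) (L : Language A),
    IsAutomaticStructure π L

section WordMetric

variable {A G : Type*} [Group G] (π : FreeMonoid A →* G)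

@[simp]
lemma evalW_append (u v : List A) : evalW π (u ++ v) = evalW π u * evalW π v :=
  map_mul π _ _

lemma prod_map_eq_evalW (w : List A) :
    (w.map fun a => π (FreeMonoid.of a)).prod = evalW π w := by
  induction w with
  | nil => exact (map_one π).symm
  | cons a w ih => simp [ih, evalW]

lemma wdist_le_length {g h : G} {l : List G} (hl : ∀ x ∈ l, x ∈ gens π)
    (hprod : l.prod = g⁻¹ * h) : wdist π g h ≤ l.length :=
  Nat.sInf_le ⟨l, rfl, hl, hprod⟩

lemma wdist_mul_evalW_le (g : G) (w : List A) : wdist π g (g * evalW π w) ≤ w.length := by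
  simpa using wdist_le_length π (l := w.map fun a => π (FreeMonoid.of a))
    (by simp only [List.mem_map]; rintro _ ⟨a, -, rfl⟩; exact Or.inl ⟨a, rfl⟩)
    (by rw [prod_map_eq_evalW]; group)

lemma exists_wdist_eq (hπ : Function.Surjective π) (g h : G) :
    ∃ l : List G, l.length = wdist π g h ∧ (∀ x ∈ l, x ∈ gens π) ∧ l.prod = g⁻¹ * h := by
  obtain ⟨w, hw⟩ := hπ (g⁻¹ * h)
  have hne : {n : ℕ | ∃ l : List G, l.length = n ∧ (∀ x ∈ l, x ∈ gens π) ∧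
      l.prod = g⁻¹ * h}.Nonempty :=
    ⟨_, w.toList.map fun a => π (FreeMonoid.of a), rfl,
      by simp only [List.mem_map]; rintro _ ⟨a, -, rfl⟩; exact Or.inl ⟨a, rfl⟩,
      by rw [prod_map_eq_evalW, ← hw]; rfl⟩
  exact Nat.sInf_mem hne

@[simp]
lemma wdist_self (g : G) : wdist π g g = 0 :=
  Nat.le_zero.mp (wdist_le_length π (l := []) (by simp) (by simp))

lemma wdist_mul_left (x g h : G) : wdist π (x * g) (x * h) = wdist π g h := by
  simp only [wdist, mul_inv_rev, mul_assoc, inv_mul_cancel_left]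

lemma inv_mem_gens {x : G} (hx : x ∈ gens π) : x⁻¹ ∈ gens π := by
  rcases hx with ⟨a, rfl⟩ | ⟨a, rfl⟩
  · exact Or.inr ⟨a, rfl⟩
  · exact Or.inl ⟨a, (inv_inv _).symm⟩

variable {π}

lemma wdist_comm (hπ : Function.Surjective π) (g h : G) : wdist π g h = wdist π h g := by
  suffices key : ∀ x y : G, wdist π x y ≤ wdist π y x from le_antisymm (key g h) (key h g)
  intro x y
  obtain ⟨l, hlen, hl, hprod⟩ := exists_wdist_eq π hπ y x
  simpa [hlen] using wdist_le_length π (l := (l.map fun z => z⁻¹).reverse)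
    (by
      simp only [List.mem_reverse, List.mem_map]
      rintro _ ⟨z, hz, rfl⟩
      exact inv_mem_gens π (hl z hz))
    (by rw [← List.prod_inv_reverse, hprod]; group)

lemma wdist_triangle (hπ : Function.Surjective π) (g h k : G) :
    wdist π g k ≤ wdist π g h + wdist π h k := by
  obtain ⟨l₁, hlen₁, hl₁, hprod₁⟩ := exists_wdist_eq π hπ g h
  obtain ⟨l₂, hlen₂, hl₂, hprod₂⟩ := exists_wdist_eq π hπ h k
  simpa [hlen₁, hlen₂] using wdist_le_length π (l := l₁ ++ l₂)
    (by simp only [List.mem_append]; rintro x (hx | hx) <;> simp [hl₁, hl₂, hx])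
    (by rw [List.prod_append, hprod₁, hprod₂]; group)

lemma wdist_take_take_le (hπ : Function.Surjective π) (w : List A) (m n : ℕ) :
    wdist π (evalW π (w.take m)) (evalW π (w.take n)) ≤ (n - m) + (m - n) := by
  have forward : ∀ i k, wdist π (evalW π (w.take i)) (evalW π (w.take (i + k))) ≤ k := by
    intro i k
    rw [List.take_add, evalW_append]
    exact (wdist_mul_evalW_le π _ _).trans (by simp)
  rcases le_total m n with hmn | hnm
  · have := forward m (n - m)
    rw [Nat.add_sub_cancel' hmn] at this
    omega
  · have := forward n (m - n)
    rw [Nat.add_sub_cancel' hnm, wdist_comm hπ] at this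
    omega

end WordMetric

section FellowTravel

variable {A G : Type*} [Group G] {π : FreeMonoid A →* G}

lemma fellowTravel_natCast_iff {N : ℕ} {u v : List A} :
    FellowTravel π N u v ↔ ∀ n, wdist π (evalW π (u.take n)) (evalW π (v.take n)) ≤ N := by
  simp only [FellowTravel, Nat.cast_le]

lemma FellowTravel.trans (hπ : Function.Surjective π) {p q : ℝ≥0} {u v w : List A}
    (huv : FellowTravel π p u v) (hvw : FellowTravel π q v w) :
    FellowTravel π (p + q) u w := fun n =>
  calc (wdist π (evalW π (u.take n)) (evalW π (w.take n)) : ℝ≥0)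
      ≤ wdist π (evalW π (u.take n)) (evalW π (v.take n))
        + wdist π (evalW π (v.take n)) (evalW π (w.take n)) := by
        exact_mod_cast wdist_triangle hπ _ _ _
    _ ≤ p + q := add_le_add (huv n) (hvw n)

lemma FellowTravel.append (hπ : Function.Surjective π) {N K : ℕ} {u₁ u₂ v₁ v₂ : List A}
    (h₁ : FellowTravel π N u₁ v₁) (he₁ : evalW π u₁ = evalW π v₁)
    (h₂ : FellowTravel π N u₂ v₂)
    (hlen_le : u₁.length ≤ v₁.length + K) (hlen_ge : v₁.length ≤ u₁.length + K) :
    FellowTravel π (N + 2 * K : ℕ) (u₁ ++ u₂) (v₁ ++ v₂) := by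
  rw [fellowTravel_natCast_iff] at h₁ h₂ ⊢
  intro n
  simp only [List.take_append, evalW_append]
  rcases le_total n (max u₁.length v₁.length) with hn | hn
  · -- before the later junction both prefixes are close to the prefixes of `u₁` and `v₁`
    set x := evalW π (u₁.take n)
    set y := evalW π (v₁.take n)
    calc wdist π (x * evalW π (u₂.take (n - u₁.length))) (y * evalW π (v₂.take (n - v₁.length)))
        ≤ wdist π (x * evalW π (u₂.take (n - u₁.length))) x
          + (wdist π x y + wdist π y (y * evalW π (v₂.take (n - v₁.length)))) :=
          (wdist_triangle hπ _ x _).trans (add_le_add_right (wdist_triangle hπ _ y _) _)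
      _ ≤ (n - u₁.length) + (N + (n - v₁.length)) := by
          rw [wdist_comm hπ]
          gcongr
          · exact (wdist_mul_evalW_le π _ _).trans (by simp)
          · exact h₁ n
          · exact (wdist_mul_evalW_le π _ _).trans (by simp)
      _ ≤ N + 2 * K := by omega
  · rw [List.take_of_length_le (le_of_max_le_left hn),
      List.take_of_length_le (le_of_max_le_right hn), he₁, wdist_mul_left]
    calc wdist π (evalW π (u₂.take (n - u₁.length))) (evalW π (v₂.take (n - v₁.length)))
        ≤ wdist π (evalW π (u₂.take (n - u₁.length))) (evalW π (v₂.take (n - u₁.length)))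
          + wdist π (evalW π (v₂.take (n - u₁.length))) (evalW π (v₂.take (n - v₁.length))) :=
          wdist_triangle hπ _ _ _
      _ ≤ N + ((n - v₁.length - (n - u₁.length)) + (n - u₁.length - (n - v₁.length))) :=
          add_le_add (h₂ _) (wdist_take_take_le hπ _ _ _)
      _ ≤ N + 2 * K := by omega

end FellowTravel

section AutomaticStructure

variable {A G : Type*} [Group G] {π : FreeMonoid A →* G} {L : Language A}

lemma IsAutomaticStructure.surjective (hL : IsAutomaticStructure π L) :
    Function.Surjective π := fun g =>
  let ⟨w, _, hw⟩ := hL.onto g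
  ⟨FreeMonoid.ofList w, hw⟩

variable {N : ℕ}
  (hN : ∀ u ∈ L, ∀ v ∈ L, wdist π (evalW π u) (evalW π v) ≤ 1 → FellowTravel π N u v)
include hN

lemma fellowTravel_of_evalW_eq {u v : List A} (hu : u ∈ L) (hv : v ∈ L)
    (he : evalW π u = evalW π v) : FellowTravel π N u v :=
  hN u hu v hv (by simp [he])

lemma length_le_add_ceil_of_evalW_eq (hπ : Function.Surjective π) {D : ℝ≥0 → ℝ≥0}
    (hD : IsDepartureFunction π L D) {u v : List A} (hu : u ∈ L) (hv : v ∈ L)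
    (he : evalW π u = evalW π v) : v.length ≤ u.length + ⌈D N⌉₊ := by
  by_contra! hlong
  have hdepart := hD v hv N u.length (v.length - u.length)
    (Nat.ceil_le.mp (by omega)) (by omega)
  rw [Nat.add_sub_cancel' (by omega), List.take_length] at hdepart
  have hclose := fellowTravel_natCast_iff.mp (fellowTravel_of_evalW_eq hN hu hv he) u.length
  rw [List.take_length, he, wdist_comm hπ] at hclose
  exact hdepart.not_ge (by exact_mod_cast hclose)

end AutomaticStructure

end Auto

open Auto

theorem representatives_fellow_travel_general {A G : Type*} [Group G]
    (π : FreeMonoid A →* G)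
    (L : Language A) (hL : IsAutomaticStructure π L)
    (D : ℝ≥0 → ℝ≥0) (hD : IsDepartureFunction π L D)
    (p : ℝ≥0) (hp : 0 < p) :
    ∃ q : ℝ≥0, 0 < q ∧ ∀ u₁ ∈ L, ∀ u₂ ∈ L, ∀ u₃ ∈ L,
      MFT π p (u₁ ++ u₂) u₃ →
      ∀ u₁' ∈ L, ∀ u₂' ∈ L, ∀ u₃' ∈ L,
        evalW π u₁' = evalW π u₁ → evalW π u₂' = evalW π u₂ →
          evalW π u₃' = evalW π u₃ →
        ∀ n : ℕ,
          (wdist π (evalW π ((u₁' ++ u₂').take n)) (evalW π (u₃'.take n)) : ℝ≥0) ≤ q := by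
  have hπ := hL.surjective
  obtain ⟨N, hN⟩ := hL.ft
  refine ⟨(N + 2 * ⌈D N⌉₊ : ℕ) + p + N, by positivity, ?_⟩
  intro u₁ hu₁ u₂ hu₂ u₃ hu₃ hmft u₁' hu₁' u₂' hu₂' u₃' hu₃' he₁ he₂ he₃
  have hprefix : FellowTravel π (N + 2 * ⌈D N⌉₊ : ℕ) (u₁' ++ u₂') (u₁ ++ u₂) :=
    (fellowTravel_of_evalW_eq hN hu₁' hu₁ he₁).append hπ he₁
      (fellowTravel_of_evalW_eq hN hu₂' hu₂ he₂)
      (length_le_add_ceil_of_evalW_eq hN hπ hD hu₁ hu₁' he₁.symm)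
      (length_le_add_ceil_of_evalW_eq hN hπ hD hu₁' hu₁ he₁)
  exact (hprefix.trans hπ hmft.1).trans hπ (fellowTravel_of_evalW_eq hN hu₃ hu₃' he₃.symm)

/-- If `L` is an automatic structure admitting a departure function, then for
every `p > 0` there is `q > 0` such that whenever `u₁u₂` and `u₃` are `p`-MFT with
`u₁,u₂,u₃ ∈ L`, any representatives `u'ᵢ ∈ L` of the same elements satisfy
`d_A((u'₁u'₂)^[n]π, u'₃^[n]π) ≤ q` for all `n`. -/
theorem representatives_fellow_travel {A G : Type*} [Fintype A] [Group G]
    (π : FreeMonoid A →* G) (hπ : Function.Surjective π)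
    (L : Language A) (hL : IsAutomaticStructure π L)
    (D : ℝ≥0 → ℝ≥0) (hD : IsDepartureFunction π L D)
    (p : ℝ≥0) (hp : 0 < p) :
    ∃ q : ℝ≥0, 0 < q ∧ ∀ u₁ ∈ L, ∀ u₂ ∈ L, ∀ u₃ ∈ L,
      MFT π p (u₁ ++ u₂) u₃ →
      ∀ u₁' ∈ L, ∀ u₂' ∈ L, ∀ u₃' ∈ L,
        evalW π u₁' = evalW π u₁ → evalW π u₂' = evalW π u₂ →
          evalW π u₃' = evalW π u₃ →
        ∀ n : ℕ,
          (wdist π (evalW π ((u₁' ++ u₂').take n)) (evalW π (u₃'.take n)) : ℝ≥0) ≤ q :=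
  representatives_fellow_travel_general π L hL D hD p hp
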